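/- arXiv:0804.0565 — 3 statements merged into one kernel-verified Lean document; each statement's English description precedes it below -/
import Mathlib

section
/- Let E, F be locally convex spaces, U ⊆ E open and convex with 0 ∈ U, and f : U → F uniformly continuous. Then f is Lipschitz on large distances: for every continuous seminorm r on E and every continuous seminorm q on F there exists a continuous seminorm p on E such that for all x₁, x₂ ∈ U with r(x₁ - x₂) ≥ 1, one has q(f(x₁) - f(x₂)) ≤ p(x₁ - x₂). -/
/-!
Local convexity turns the uniform continuity of `f` into a continuous seminorm `s` (the gauge of
an absolutely convex neighbourhood of `0`) such that `s`-close points of `U` go to points at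
`q`-distance less than one. Cutting the segment from `x₂` to `x₁` (which stays in the convex
set `U`) into `⌊s (x₁ - x₂)⌋ + 1` pieces of `s`-length less than one and summing gives
`q (f x₁ - f x₂) ≤ s (x₁ - x₂) + 1`, so `p = s + r` works on pairs with `1 ≤ r (x₁ - x₂)`.
-/

open Filter Set Uniformity Topology

section Chain

variable {E F : Type*} [AddCommGroup E] [Module ℝ E] [AddCommGroup F] [Module ℝ F]
  {U : Set E} {f : E → F} {s : Seminorm ℝ E} {q : Seminorm ℝ F}

theorem Convex.seminorm_map_sub_le_of_lt_natCast (hU : Convex ℝ U)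
    (hf : ∀ x ∈ U, ∀ y ∈ U, s (y - x) < 1 → q (f y - f x) ≤ 1)
    {x₁ x₂ : E} (hx₁ : x₁ ∈ U) (hx₂ : x₂ ∈ U) {n : ℕ} (hn : s (x₁ - x₂) < n) :
    q (f x₁ - f x₂) ≤ n := by
  have hn_pos : (0 : ℝ) < n := (apply_nonneg s _).trans_lt hn
  set g : ℕ → E := fun k => x₂ + ((k : ℝ) / n) • (x₁ - x₂)
  have hg_mem : ∀ k ≤ n, g k ∈ U := fun k hk =>
    hU.add_smul_sub_mem hx₂ hx₁
      ⟨by positivity, (div_le_one hn_pos).2 (by exact_mod_cast hk)⟩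
  have hg_step : ∀ k, g (k + 1) - g k = (n : ℝ)⁻¹ • (x₁ - x₂) := fun k => by
    simp only [g, Nat.cast_succ]
    module
  have hstep : ∀ k < n, q (f (g (k + 1)) - f (g k)) ≤ 1 := fun k hk => by
    refine hf _ (hg_mem k hk.le) _ (hg_mem (k + 1) hk) ?_
    rwa [hg_step, map_smul_eq_mul, norm_inv, Real.norm_natCast, inv_mul_lt_one₀ hn_pos]
  have hsum : f x₁ - f x₂ = ∑ k ∈ Finset.range n, (f (g (k + 1)) - f (g k)) := by
    rw [Finset.sum_range_sub (fun k => f (g k))]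
    simp [g, hn_pos.ne']
  calc q (f x₁ - f x₂) ≤ ∑ k ∈ Finset.range n, q (f (g (k + 1)) - f (g k)) := by
        rw [hsum]; exact Finset.le_sum_of_subadditive q (map_zero q).le (map_add_le_add q) _ _
    _ ≤ ∑ _k ∈ Finset.range n, (1 : ℝ) :=
        Finset.sum_le_sum fun k hk => hstep k (Finset.mem_range.1 hk)
    _ = n := by simp

theorem Convex.seminorm_map_sub_le_add_one (hU : Convex ℝ U)
    (hf : ∀ x ∈ U, ∀ y ∈ U, s (y - x) < 1 → q (f y - f x) ≤ 1)
    {x₁ x₂ : E} (hx₁ : x₁ ∈ U) (hx₂ : x₂ ∈ U) :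
    q (f x₁ - f x₂) ≤ s (x₁ - x₂) + 1 :=
  (hU.seminorm_map_sub_le_of_lt_natCast hf hx₁ hx₂ (n := ⌊s (x₁ - x₂)⌋₊ + 1)
    (by exact_mod_cast Nat.lt_floor_add_one _)).trans <| by
    push_cast
    linarith [Nat.floor_le (apply_nonneg s (x₁ - x₂))]

end Chain

theorem Seminorm.setOf_sub_lt_mem_uniformity {𝕜 F : Type*} [SeminormedRing 𝕜] [AddCommGroup F]
    [Module 𝕜 F] [UniformSpace F] [IsUniformAddGroup F] {q : Seminorm 𝕜 F} (hq : Continuous q)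
    {ε : ℝ} (hε : 0 < ε) : {y : F × F | q (y.2 - y.1) < ε} ∈ 𝓤 F := by
  rw [uniformity_eq_comap_nhds_zero F]
  exact preimage_mem_comap (by simpa [Seminorm.ball_zero_eq] using q.ball_mem_nhds hq hε)

theorem exists_continuous_seminorm_ball_subset {E : Type*} [AddCommGroup E] [Module ℝ E]
    [TopologicalSpace E] [IsTopologicalAddGroup E] [ContinuousSMul ℝ E]
    [LocallyConvexSpace ℝ E] {N : Set E} (hN : N ∈ 𝓝 0) :
    ∃ s : Seminorm ℝ E, Continuous s ∧ s.ball 0 1 ⊆ N := by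
  obtain ⟨C, ⟨hC0, hCopen, hCbal, hCconv⟩, hCN⟩ :=
    (nhds_hasBasis_absConvex_open ℝ E).mem_iff.1 hN
  let s : Seminorm ℝ E :=
    gaugeSeminorm hCbal hCconv (absorbent_nhds_zero (hCopen.mem_nhds hC0))
  have hball : s.ball 0 1 = C := gaugeSeminorm_ball_one hCopen
  exact ⟨s, Seminorm.continuous (r := 1) (hball ▸ hCopen.mem_nhds hC0), hball ▸ hCN⟩

theorem exists_continuous_seminorm_lt_one_subset_of_mem_uniformity {E : Type*} [AddCommGroup E]
    [Module ℝ E] [UniformSpace E] [IsUniformAddGroup E] [ContinuousSMul ℝ E]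
    [LocallyConvexSpace ℝ E] {V : Set (E × E)} (hV : V ∈ 𝓤 E) :
    ∃ s : Seminorm ℝ E, Continuous s ∧ {x : E × E | s (x.2 - x.1) < 1} ⊆ V := by
  rw [uniformity_eq_comap_nhds_zero E] at hV
  obtain ⟨N, hN, hNV⟩ := mem_comap.1 hV
  obtain ⟨s, hs, hsN⟩ := exists_continuous_seminorm_ball_subset hN
  exact ⟨s, hs, fun x hx => hNV (hsN (by simpa [Seminorm.mem_ball_zero] using hx))⟩

theorem UniformContinuousOn.exists_continuous_seminorm_lt_one {E F : Type*}
    [AddCommGroup E] [Module ℝ E] [UniformSpace E] [IsUniformAddGroup E]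
    [ContinuousSMul ℝ E] [LocallyConvexSpace ℝ E]
    [AddCommGroup F] [Module ℝ F] [UniformSpace F] [IsUniformAddGroup F]
    {U : Set E} {f : E → F} (hf : UniformContinuousOn f U) {q : Seminorm ℝ F}
    (hq : Continuous q) :
    ∃ s : Seminorm ℝ E, Continuous s ∧
      ∀ x ∈ U, ∀ y ∈ U, s (y - x) < 1 → q (f y - f x) < 1 := by
  have hV := hf (q.setOf_sub_lt_mem_uniformity hq one_pos)
  rw [mem_map, mem_inf_principal] at hV
  obtain ⟨s, hs, hsV⟩ := exists_continuous_seminorm_lt_one_subset_of_mem_uniformity hV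
  exact ⟨s, hs, fun x hx y hy hxy => hsV (show s (y - x) < 1 from hxy) (mk_mem_prod hx hy)⟩

theorem uniformContinuous_lipschitz_on_large_distances_general
    {E F : Type*}
    [AddCommGroup E] [Module ℝ E] [UniformSpace E] [IsUniformAddGroup E]
    [ContinuousSMul ℝ E] [LocallyConvexSpace ℝ E]
    [AddCommGroup F] [Module ℝ F] [UniformSpace F] [IsUniformAddGroup F]
    (U : Set E) (hUconv : Convex ℝ U)
    (f : E → F) (hf : UniformContinuousOn f U) :
    ∀ r : Seminorm ℝ E, Continuous r → ∀ q : Seminorm ℝ F, Continuous q →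
      ∃ p : Seminorm ℝ E, Continuous p ∧
        ∀ x₁ ∈ U, ∀ x₂ ∈ U, 1 ≤ r (x₁ - x₂) → q (f x₁ - f x₂) ≤ p (x₁ - x₂) := by
  intro r hr q hq
  obtain ⟨s, hs, hsq⟩ := hf.exists_continuous_seminorm_lt_one hq
  refine ⟨s + r, by simpa only [FunLike.coe_add] using hs.add hr, fun x₁ hx₁ x₂ hx₂ hr₁ => ?_⟩
  calc q (f x₁ - f x₂)
      ≤ s (x₁ - x₂) + 1 :=
        hUconv.seminorm_map_sub_le_add_one (fun x hx y hy h => (hsq x hx y hy h).le) hx₁ hx₂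
    _ ≤ (s + r) (x₁ - x₂) := by rw [add_apply]; linarith

/-- A uniformly continuous map on an open convex `0`-neighborhood of a locally convex
space is Lipschitz on large distances. -/
theorem uniformContinuous_lipschitz_on_large_distances
    {E F : Type*}
    [AddCommGroup E] [Module ℝ E] [UniformSpace E] [IsUniformAddGroup E]
    [ContinuousSMul ℝ E] [LocallyConvexSpace ℝ E]
    [AddCommGroup F] [Module ℝ F] [UniformSpace F] [IsUniformAddGroup F]
    [ContinuousSMul ℝ F] [LocallyConvexSpace ℝ F]
    (U : Set E) (hUopen : IsOpen U) (hUconv : Convex ℝ U) (hU0 : (0 : E) ∈ U)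
    (f : E → F) (hf : UniformContinuousOn f U) :
    ∀ r : Seminorm ℝ E, Continuous r → ∀ q : Seminorm ℝ F, Continuous q →
      ∃ p : Seminorm ℝ E, Continuous p ∧
        ∀ x₁ ∈ U, ∀ x₂ ∈ U, 1 ≤ r (x₁ - x₂) → q (f x₁ - f x₂) ≤ p (x₁ - x₂) :=
  uniformContinuous_lipschitz_on_large_distances_general U hUconv f hf
end

section
/- Let E, F be locally convex spaces, U ⊆ E open, f : U → F continuous, and suppose there exists a continuous map f^[1] : U^[1] → F, where U^[1] = {(x,y,t) ∈ U × E × ℝ | x + ty ∈ U}, such that f^[1](x,y,t) = (f(x+ty) - f(x))/t whenever t ≠ 0. Then f is C¹ in the Michal–Bastiani sense and df(x)(y) = f^[1](x,y,0). -/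
open Filter Topology

section DifferenceQuotient

variable {𝕜 E F : Type*} [NontriviallyNormedField 𝕜]
  [AddCommGroup E] [Module 𝕜 E] [TopologicalSpace E] [TopologicalSpace F]

theorem add_smul_mem_nhds_zero [ContinuousAdd E] [ContinuousSMul 𝕜 E] {U : Set E}
    (hU : IsOpen U) {x : E} (hx : x ∈ U) (y : E) : {t : 𝕜 | x + t • y ∈ U} ∈ 𝓝 0 :=
  (hU.preimage (by fun_prop)).mem_nhds (by simpa using hx)

theorem tendsto_slope_of_continuousOn_extension [ContinuousAdd E] [ContinuousSMul 𝕜 E]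
    [AddCommGroup F] [Module 𝕜 F]
    {U : Set E} (hU : IsOpen U) {f : E → F} {f1 : E × E × 𝕜 → F}
    (hf1cont : ContinuousOn f1 {p : E × E × 𝕜 | p.1 ∈ U ∧ p.1 + p.2.2 • p.2.1 ∈ U})
    (hf1eq : ∀ x ∈ U, ∀ y : E, ∀ t : 𝕜, t ≠ 0 → x + t • y ∈ U →
      f1 (x, y, t) = t⁻¹ • (f (x + t • y) - f x))
    {x : E} (hx : x ∈ U) (y : E) :
    Tendsto (fun t : 𝕜 => t⁻¹ • (f (x + t • y) - f x)) (𝓝[≠] 0) (𝓝 (f1 (x, y, 0))) := by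
  have hS := add_smul_mem_nhds_zero (𝕜 := 𝕜) hU hx y
  have hline : Tendsto (fun t : 𝕜 => (x, y, t))
      (𝓝 0) (𝓝[{p | p.1 ∈ U ∧ p.1 + p.2.2 • p.2.1 ∈ U}] (x, y, 0)) :=
    tendsto_nhdsWithin_iff.2
      ⟨(by fun_prop : Continuous fun t : 𝕜 => (x, y, t)).tendsto' 0 _ rfl,
        mem_of_superset hS fun t ht => ⟨hx, ht⟩⟩
  have hcont : Tendsto (fun t : 𝕜 => f1 (x, y, t)) (𝓝 0) (𝓝 (f1 (x, y, 0))) :=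
    (hf1cont _ ⟨hx, by simpa using hx⟩).tendsto.comp hline
  refine (hcont.mono_left nhdsWithin_le_nhds).congr' ?_
  filter_upwards [self_mem_nhdsWithin, mem_nhdsWithin_of_mem_nhds hS] with t ht htS
  exact hf1eq x hx y t ht htS

theorem continuousOn_extension_at_zero {U : Set E} {f1 : E × E × 𝕜 → F}
    (hf1cont : ContinuousOn f1 {p : E × E × 𝕜 | p.1 ∈ U ∧ p.1 + p.2.2 • p.2.1 ∈ U}) :
    ContinuousOn (fun p : E × E => f1 (p.1, p.2, 0)) (U ×ˢ Set.univ) :=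
  hf1cont.comp (by fun_prop) fun p hp => ⟨hp.1, by simpa using hp.1⟩

end DifferenceQuotient

theorem bgn_c1_characterization_general
    {E F : Type*}
    [AddCommGroup E] [Module ℝ E] [TopologicalSpace E] [IsTopologicalAddGroup E]
    [ContinuousSMul ℝ E]
    [AddCommGroup F] [Module ℝ F] [TopologicalSpace F]
    (U : Set E) (hU : IsOpen U) (f : E → F)
    (f1 : E × E × ℝ → F)
    (hf1cont : ContinuousOn f1 {p : E × E × ℝ | p.1 ∈ U ∧ p.1 + p.2.2 • p.2.1 ∈ U})
    (hf1eq : ∀ x ∈ U, ∀ y : E, ∀ t : ℝ, t ≠ 0 → x + t • y ∈ U →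
      f1 (x, y, t) = t⁻¹ • (f (x + t • y) - f x)) :
    (∀ x ∈ U, ∀ y : E,
      Tendsto (fun t : ℝ => t⁻¹ • (f (x + t • y) - f x)) (nhdsWithin 0 {0}ᶜ)
        (nhds (f1 (x, y, 0)))) ∧
    ContinuousOn (fun p : E × E => f1 (p.1, p.2, 0)) (U ×ˢ Set.univ) :=
  ⟨fun _ hx y => tendsto_slope_of_continuousOn_extension hU hf1cont hf1eq hx y,
    continuousOn_extension_at_zero hf1cont⟩

/-- The BGN characterization of `C¹`: if `f` is continuous on the open set `U` and
there is a continuous map `f¹` on `U⁽¹⁾ = {(x,y,t) | x ∈ U, x + t•y ∈ U}` with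
`f¹(x,y,t) = (f(x+ty) - f(x))/t` for `t ≠ 0`, then `f` is Michal–Bastiani `C¹` with
`df(x)(y) = f¹(x,y,0)`: all directional derivatives exist and equal `f¹(x,y,0)`, and
the differential is jointly continuous. -/
theorem bgn_c1_characterization
    {E F : Type*}
    [AddCommGroup E] [Module ℝ E] [TopologicalSpace E] [IsTopologicalAddGroup E]
    [ContinuousSMul ℝ E] [LocallyConvexSpace ℝ E]
    [AddCommGroup F] [Module ℝ F] [TopologicalSpace F] [IsTopologicalAddGroup F]
    [ContinuousSMul ℝ F] [LocallyConvexSpace ℝ F]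
    (U : Set E) (hU : IsOpen U) (f : E → F)
    (hf : ContinuousOn f U)
    (f1 : E × E × ℝ → F)
    (hf1cont : ContinuousOn f1 {p : E × E × ℝ | p.1 ∈ U ∧ p.1 + p.2.2 • p.2.1 ∈ U})
    (hf1eq : ∀ x ∈ U, ∀ y : E, ∀ t : ℝ, t ≠ 0 → x + t • y ∈ U →
      f1 (x, y, t) = t⁻¹ • (f (x + t • y) - f x)) :
    (∀ x ∈ U, ∀ y : E,
      Tendsto (fun t : ℝ => t⁻¹ • (f (x + t • y) - f x)) (nhdsWithin 0 {0}ᶜ)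
        (nhds (f1 (x, y, 0)))) ∧
    ContinuousOn (fun p : E × E => f1 (p.1, p.2, 0)) (U ×ˢ Set.univ) :=
  bgn_c1_characterization_general U hU f f1 hf1cont hf1eq
end

section
/- Let E, F be locally convex spaces, U ⊆ E open, and f : U → F uniformly continuous. Let U₁ be a symmetric open neighborhood of 0 in E with U₁ + U₁ ⊆ U. If B ⊆ U₁ is a totally bounded subset of E, then f(B) is bounded in F. -/
open scoped Pointwise

theorem UniformContinuousOn.totallyBounded_image {α β : Type*} [UniformSpace α] [UniformSpace β]
    {f : α → β} {s t : Set α} (hf : UniformContinuousOn f s) (hts : t ⊆ s)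
    (ht : TotallyBounded t) : TotallyBounded (f '' t) := by
  have ht' : TotallyBounded ((↑) ⁻¹' t : Set s) :=
    totallyBounded_preimage isUniformEmbedding_subtype_val.isUniformInducing ht
  have himage : s.domRestrict f '' ((↑) ⁻¹' t) = f '' t := by
    rw [Set.domRestrict_eq, Set.image_comp, Subtype.image_preimage_coe,
      Set.inter_eq_right.mpr hts]
  exact himage ▸ ht'.image hf.restrict

theorem uniformContinuous_image_totallyBounded_isVonNBounded_general
    {E F : Type*}
    [AddCommGroup E] [UniformSpace E]
    [AddCommGroup F] [Module ℝ F] [UniformSpace F] [IsUniformAddGroup F]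
    [ContinuousSMul ℝ F]
    (U : Set E) (f : E → F) (hf : UniformContinuousOn f U)
    (U₁ : Set E) (hU₁0 : (0 : E) ∈ U₁)
    (hU₁add : U₁ + U₁ ⊆ U)
    (B : Set E) (hBU₁ : B ⊆ U₁) (hB : TotallyBounded B) :
    Bornology.IsVonNBounded ℝ (f '' B) := by
  have hBU : B ⊆ U := hBU₁.trans ((Set.subset_add_left U₁ hU₁0).trans hU₁add)
  exact (hf.totallyBounded_image hBU hB).isVonNBounded ℝ

/-- A uniformly continuous map on an open set `U` of a locally convex space maps
totally bounded subsets of a symmetric open `0`-neighborhood `U₁` with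
`U₁ + U₁ ⊆ U` to bounded sets. -/
theorem uniformContinuous_image_totallyBounded_isVonNBounded
    {E F : Type*}
    [AddCommGroup E] [Module ℝ E] [UniformSpace E] [IsUniformAddGroup E]
    [ContinuousSMul ℝ E] [LocallyConvexSpace ℝ E]
    [AddCommGroup F] [Module ℝ F] [UniformSpace F] [IsUniformAddGroup F]
    [ContinuousSMul ℝ F] [LocallyConvexSpace ℝ F]
    (U : Set E) (hUopen : IsOpen U) (f : E → F) (hf : UniformContinuousOn f U)
    (U₁ : Set E) (hU₁open : IsOpen U₁) (hU₁0 : (0 : E) ∈ U₁)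
    (hU₁symm : -U₁ = U₁) (hU₁add : U₁ + U₁ ⊆ U)
    (B : Set E) (hBU₁ : B ⊆ U₁) (hB : TotallyBounded B) :
    Bornology.IsVonNBounded ℝ (f '' B) :=
  uniformContinuous_image_totallyBounded_isVonNBounded_general U f hf U₁ hU₁0 hU₁add B hBU₁ hB
end
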